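/- Let (V₁, ν¹, τ, τ*) and (V₂, ν², τ, τ*) be strongly complete PN spaces with τ, τ* sup-continuous, and let σ be a triangle function with τ* ≫ σ and σ ≫ τ (domination). Then the σ-product (V₁ × V₂, ν¹ σ ν², τ, τ*), where (ν¹ σ ν²)(p,q) := σ(ν¹_p, ν²_q), is a strongly complete PN space. -/

import Mathlib

open Filter Topology Set

/-- A distribution function in `Δ⁺`: nondecreasing, left-continuous,
vanishing on `(-∞,0]` and bounded by `1`. -/
structure DistFun where
  toFun : ℝ → ℝ
  mono' : Monotone toFun
  leftCont' : ∀ x, Filter.Tendsto toFun (nhdsWithin x (Set.Iio x)) (nhds (toFun x))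
  zero' : ∀ x ≤ (0 : ℝ), toFun x = 0
  le_one' : ∀ x, toFun x ≤ 1

instance : CoeFun DistFun (fun _ => ℝ → ℝ) := ⟨DistFun.toFun⟩

/-- Pointwise order on `Δ⁺`. -/
instance : LE DistFun := ⟨fun F G => ∀ x, F.toFun x ≤ G.toFun x⟩

/-- The unit step distribution function `ε_a` for `a ≥ 0`. -/
noncomputable def unitStep (a : ℝ) (_ha : 0 ≤ a) : DistFun where
  toFun x := if x ≤ a then 0 else 1
  mono' := by
    intro x y hxy
    by_cases hx : x ≤ a <;> by_cases hy : y ≤ a <;> simp [hx, hy] <;> linarith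
  leftCont' := by
    intro x
    by_cases hx : x ≤ a
    · have h : (fun y => if y ≤ a then (0:ℝ) else 1) =ᶠ[nhdsWithin x (Set.Iio x)]
          fun _ => (0:ℝ) := by
        filter_upwards [self_mem_nhdsWithin] with y hy
        exact if_pos ((le_of_lt hy).trans hx)
      simpa [if_pos hx] using (tendsto_const_nhds (α := ℝ)).congr' h.symm
    · have hax : a < x := not_le.mp hx
      have h : (fun y => if y ≤ a then (0:ℝ) else 1) =ᶠ[nhdsWithin x (Set.Iio x)]
          fun _ => (1:ℝ) := by
        filter_upwards [(eventually_gt_nhds hax).filter_mono nhdsWithin_le_nhds] with y hy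
        exact if_neg (not_le.mpr hy)
      simpa [if_neg hx] using (tendsto_const_nhds (α := ℝ)).congr' h.symm
  zero' := fun x hx => if_pos (hx.trans _ha)
  le_one' := by intro x; by_cases h : x ≤ a <;> simp [h]

/-- The maximal element `ε₀` of `Δ⁺`. -/
noncomputable def eps0 : DistFun := unitStep 0 le_rfl

/-- The one-sided Lévy condition `(F,G;h)`. -/
def levyCond (F G : DistFun) (h : ℝ) : Prop :=
  ∀ x : ℝ, -(1/h) < x → x < 1/h →
    F.toFun (x - h) - h ≤ G.toFun x ∧ G.toFun x ≤ F.toFun (x + h) + h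

/-- The Sibley (modified Lévy) metric on `Δ⁺`. -/
noncomputable def sibley (F G : DistFun) : ℝ :=
  sInf {h : ℝ | 0 < h ∧ h ≤ 1 ∧ levyCond F G h ∧ levyCond G F h}

/-- Triangle function: associative, commutative, nondecreasing binary
operation on `Δ⁺` with identity `ε₀`. -/
structure IsTriangleFun (τ : DistFun → DistFun → DistFun) : Prop where
  comm : ∀ F G, τ F G = τ G F
  assoc : ∀ F G H, τ (τ F G) H = τ F (τ G H)
  mono : ∀ F G H, F ≤ G → τ F H ≤ τ G H
  ident : ∀ F, τ F eps0 = F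

/-- Continuity of a triangle function w.r.t. the Sibley metric (sequential form). -/
def TriCont (τ : DistFun → DistFun → DistFun) : Prop :=
  ∀ (F G : ℕ → DistFun) (F₀ G₀ : DistFun),
    Filter.Tendsto (fun n => sibley (F n) F₀) Filter.atTop (nhds 0) →
    Filter.Tendsto (fun n => sibley (G n) G₀) Filter.atTop (nhds 0) →
    Filter.Tendsto (fun n => sibley (τ (F n) (G n)) (τ F₀ G₀)) Filter.atTop (nhds 0)

/-- Sup-continuity of a triangle function: `τ (sup_i F_i) G = sup_i τ (F_i) G`
(pointwise). -/
def SupCont (τ : DistFun → DistFun → DistFun) : Prop :=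
  ∀ {ι : Type} [Nonempty ι] (F : ι → DistFun) (S G : DistFun),
    (∀ x, S.toFun x = ⨆ i, (F i).toFun x) →
    ∀ x, (τ S G).toFun x = ⨆ i, (τ (F i) G).toFun x

/-- Domination `τ₁ ≫ τ₂` of triangle functions. -/
def Dominates (τ₁ τ₂ : DistFun → DistFun → DistFun) : Prop :=
  ∀ F₁ F₂ G₁ G₂, τ₂ (τ₁ F₁ F₂) (τ₁ G₁ G₂) ≤ τ₁ (τ₂ F₁ G₁) (τ₂ F₂ G₂)

/-- A probabilistic pseudo-normed space `(V, ν, τ, τ*)`. -/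
structure IsPPNSpace {V : Type*} [AddCommGroup V] [Module ℝ V]
    (ν : V → DistFun) (τ τs : DistFun → DistFun → DistFun) : Prop where
  tri : IsTriangleFun τ
  tri_s : IsTriangleFun τs
  cont : TriCont τ
  cont_s : TriCont τs
  tau_le : ∀ F G, τ F G ≤ τs F G
  N1' : ν 0 = eps0
  N2 : ∀ p, ν (-p) = ν p
  N3 : ∀ p q, τ (ν p) (ν q) ≤ ν (p + q)
  N4 : ∀ (p : V) (α : ℝ), 0 ≤ α → α ≤ 1 →
    ν p ≤ τs (ν (α • p)) (ν ((1 - α) • p))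

/-- A probabilistic normed space `(V, ν, τ, τ*)`. -/
structure IsPNSpace {V : Type*} [AddCommGroup V] [Module ℝ V]
    (ν : V → DistFun) (τ τs : DistFun → DistFun → DistFun)
    extends IsPPNSpace ν τ τs : Prop where
  N1 : ∀ p, ν p = eps0 ↔ p = 0

/-- The strong topology of a PN space, generated by the strong neighbourhoods
`N_p(t) = {q : ν_{q-p}(t) > 1 - t}`. -/
def strongTop {V : Type*} [AddCommGroup V] (ν : V → DistFun) : TopologicalSpace V :=
  TopologicalSpace.generateFrom
    {S | ∃ (p : V) (t : ℝ), 0 < t ∧ S = {q | 1 - t < (ν (q - p)).toFun t}}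

/-- A set is closed in the strong topology. -/
def StrongClosed {V : Type*} [AddCommGroup V] (ν : V → DistFun) (S : Set V) : Prop :=
  @IsClosed V (strongTop ν) S

/-- A strong Cauchy sequence. -/
def StrongCauchy {V : Type*} [AddCommGroup V] (ν : V → DistFun) (p : ℕ → V) : Prop :=
  ∀ t : ℝ, 0 < t → ∃ N : ℕ, ∀ m n, N ≤ m → N ≤ n → 1 - t < (ν (p n - p m)).toFun t

/-- Strong convergence of a sequence to a point. -/
def StrongConv {V : Type*} [AddCommGroup V] (ν : V → DistFun) (p : ℕ → V) (x : V) : Prop :=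
  ∀ t : ℝ, 0 < t → ∃ N : ℕ, ∀ n, N ≤ n → 1 - t < (ν (p n - x)).toFun t

/-- Strong completeness. -/
def StrongComplete {V : Type*} [AddCommGroup V] (ν : V → DistFun) : Prop :=
  ∀ p : ℕ → V, StrongCauchy ν p → ∃ x, StrongConv ν p x

/-! The norm axioms of the σ-product follow componentwise: domination `σ ≫ τ` bounds `τ` of two
products by the product of the `τ`'s (axiom N3), and `τ* ≫ σ` does the same for the convexity
axiom N4. Since `σ F G ≤ F, G`, a strong Cauchy sequence in the product has strong Cauchy
components, which converge by completeness of the factors. Putting `ε₀` into two of the four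
slots of `σ ≫ τ` gives `τ ≤ σ`, so the product sequence converges as soon as
`τ(ν¹_{x_n - x}, ν²_{y_n - y}) → ε₀`; this is continuity of `τ` at `(ε₀, ε₀)`, strong convergence
to `ε₀` being convergence in the Sibley metric. -/

namespace DistFun

lemma ext {F G : DistFun} (h : ∀ x, F.toFun x = G.toFun x) : F = G := by
  cases F; cases G; congr; exact funext h

instance : PartialOrder DistFun where
  le := (· ≤ ·)
  le_refl _ _ := le_rfl
  le_trans _ _ _ h₁ h₂ x := (h₁ x).trans (h₂ x)
  le_antisymm _ _ h₁ h₂ := ext fun x => le_antisymm (h₁ x) (h₂ x)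

lemma nonneg (F : DistFun) (x : ℝ) : 0 ≤ F.toFun x := by
  rcases le_or_gt x 0 with hx | hx
  · rw [F.zero' x hx]
  · exact (F.zero' 0 le_rfl).symm.trans_le (F.mono' hx.le)

lemma eps0_apply (x : ℝ) : eps0.toFun x = if x ≤ 0 then 0 else 1 := rfl

lemma le_eps0 (F : DistFun) : F ≤ eps0 := by
  intro x
  rw [eps0_apply]
  split_ifs with hx
  · rw [F.zero' x hx]
  · exact F.le_one' x

end DistFun

open DistFun

namespace IsTriangleFun

variable {σ : DistFun → DistFun → DistFun}

lemma mono₂ (hσ : IsTriangleFun σ) {F F' G G' : DistFun} (hF : F ≤ F') (hG : G ≤ G') :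
    σ F G ≤ σ F' G' :=
  calc σ F G ≤ σ F' G := hσ.mono _ _ _ hF
    _ = σ G F' := hσ.comm _ _
    _ ≤ σ G' F' := hσ.mono _ _ _ hG
    _ = σ F' G' := hσ.comm _ _

lemma le_left (hσ : IsTriangleFun σ) (F G : DistFun) : σ F G ≤ F :=
  calc σ F G ≤ σ F eps0 := hσ.mono₂ le_rfl (le_eps0 G)
    _ = F := hσ.ident F

lemma le_right (hσ : IsTriangleFun σ) (F G : DistFun) : σ F G ≤ G :=
  hσ.comm F G ▸ hσ.le_left G F

lemma eq_eps0_iff (hσ : IsTriangleFun σ) {F G : DistFun} :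
    σ F G = eps0 ↔ F = eps0 ∧ G = eps0 := by
  constructor
  · intro h
    exact ⟨(le_eps0 F).antisymm (h ▸ hσ.le_left F G),
      (le_eps0 G).antisymm (h ▸ hσ.le_right F G)⟩
  · rintro ⟨rfl, rfl⟩
    exact hσ.ident eps0

end IsTriangleFun

lemma Dominates.le {σ τ : DistFun → DistFun → DistFun} (hdom : Dominates σ τ)
    (hσ : IsTriangleFun σ) (hτ : IsTriangleFun τ) (F G : DistFun) : τ F G ≤ σ F G := by
  simpa only [hσ.ident, hτ.ident, hσ.comm eps0, hτ.comm eps0] using hdom F eps0 eps0 G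

lemma levyCond_one (F G : DistFun) : levyCond F G 1 := fun x _ _ =>
  ⟨by linarith [F.le_one' (x - 1), G.nonneg x], by linarith [G.le_one' x, F.nonneg (x + 1)]⟩

lemma sibley_nonneg (F G : DistFun) : 0 ≤ sibley F G :=
  Real.sInf_nonneg fun _ hh => hh.1.le

lemma sibley_eps0_le {F : DistFun} {s : ℝ} (hs0 : 0 < s) (hs1 : s ≤ 1)
    (h : 1 - s < F.toFun s) : sibley F eps0 ≤ s := by
  refine csInf_le ⟨0, fun _ hh => hh.1.le⟩ ⟨hs0, hs1, fun x _ _ => ⟨?_, ?_⟩, fun x _ _ => ⟨?_, ?_⟩⟩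
  all_goals rw [eps0_apply]; split_ifs with hx
  · rw [F.zero' _ (by linarith)]; linarith
  · linarith [F.le_one' (x - s)]
  · linarith [F.nonneg (x + s)]
  · linarith [F.mono' (show s ≤ x + s by linarith)]
  · linarith [F.nonneg x]
  · linarith [F.mono' (show s ≤ x by linarith)]
  · rw [F.zero' x (by linarith)]; linarith
  · linarith [F.le_one' x]

lemma lt_apply_of_sibley_eps0_lt {F : DistFun} {t : ℝ} (ht0 : 0 < t) (ht1 : t ≤ 1)
    (h : sibley F eps0 < t) : 1 - t < F.toFun t := by
  obtain ⟨s, ⟨hs0, -, -, hlevy⟩, hst⟩ :=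
    exists_lt_of_csInf_lt (by exact ⟨1, one_pos, le_rfl, levyCond_one _ _, levyCond_one _ _⟩) h
  have ht_lt : t < 1 / s := by rw [lt_div_iff₀ hs0]; nlinarith
  have hkey := (hlevy t (by linarith [one_div_pos.mpr hs0]) ht_lt).1
  rw [eps0_apply, if_neg (by linarith)] at hkey
  linarith

lemma tendsto_sibley_eps0_iff (F : ℕ → DistFun) :
    Tendsto (fun n => sibley (F n) eps0) atTop (𝓝 0) ↔
      ∀ t : ℝ, 0 < t → ∃ N : ℕ, ∀ n, N ≤ n → 1 - t < (F n).toFun t := by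
  rw [Metric.tendsto_atTop]
  simp only [Real.dist_eq, sub_zero, abs_of_nonneg (sibley_nonneg _ _)]
  constructor
  · intro h t ht
    rcases le_or_gt t 1 with ht1 | ht1
    · obtain ⟨N, hN⟩ := h t ht
      exact ⟨N, fun n hn => lt_apply_of_sibley_eps0_lt ht ht1 (hN n hn)⟩
    · exact ⟨0, fun n _ => by linarith [(F n).nonneg t]⟩
  · intro h ε hε
    have hs : 0 < min (ε / 2) 1 := lt_min (half_pos hε) one_pos
    obtain ⟨N, hN⟩ := h _ hs
    refine ⟨N, fun n hn => ?_⟩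
    calc sibley (F n) eps0 ≤ min (ε / 2) 1 := sibley_eps0_le hs (min_le_right _ _) (hN n hn)
      _ < ε := (min_le_left _ _).trans_lt (half_lt_self hε)

section SigmaProduct

variable {V₁ V₂ : Type*} {ν₁ : V₁ → DistFun} {ν₂ : V₂ → DistFun}
  {τ τs σ : DistFun → DistFun → DistFun}

def sigmaProd (σ : DistFun → DistFun → DistFun) (ν₁ : V₁ → DistFun) (ν₂ : V₂ → DistFun) :
    V₁ × V₂ → DistFun :=
  fun pq => σ (ν₁ pq.1) (ν₂ pq.2)

lemma sigmaProd_apply (p : V₁ × V₂) : sigmaProd σ ν₁ ν₂ p = σ (ν₁ p.1) (ν₂ p.2) := rfl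

variable [AddCommGroup V₁] [AddCommGroup V₂]

lemma IsPNSpace.sigmaProd [Module ℝ V₁] [Module ℝ V₂]
    (h₁ : IsPNSpace ν₁ τ τs) (h₂ : IsPNSpace ν₂ τ τs) (hσ : IsTriangleFun σ)
    (hdom₁ : Dominates τs σ) (hdom₂ : Dominates σ τ) :
    IsPNSpace (sigmaProd σ ν₁ ν₂) τ τs where
  tri := h₁.tri
  tri_s := h₁.tri_s
  cont := h₁.cont
  cont_s := h₁.cont_s
  tau_le := h₁.tau_le
  N1' := by rw [sigmaProd_apply, Prod.fst_zero, Prod.snd_zero, h₁.N1', h₂.N1', hσ.ident]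
  N2 p := by rw [sigmaProd_apply, sigmaProd_apply, Prod.fst_neg, Prod.snd_neg, h₁.N2, h₂.N2]
  N3 p q :=
    calc τ (σ (ν₁ p.1) (ν₂ p.2)) (σ (ν₁ q.1) (ν₂ q.2))
        ≤ σ (τ (ν₁ p.1) (ν₁ q.1)) (τ (ν₂ p.2) (ν₂ q.2)) := hdom₂ _ _ _ _
      _ ≤ σ (ν₁ (p.1 + q.1)) (ν₂ (p.2 + q.2)) := hσ.mono₂ (h₁.N3 _ _) (h₂.N3 _ _)
  N4 p α hα0 hα1 :=
    calc σ (ν₁ p.1) (ν₂ p.2)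
        ≤ σ (τs (ν₁ (α • p.1)) (ν₁ ((1 - α) • p.1))) (τs (ν₂ (α • p.2)) (ν₂ ((1 - α) • p.2))) :=
          hσ.mono₂ (h₁.N4 _ α hα0 hα1) (h₂.N4 _ α hα0 hα1)
      _ ≤ τs (σ (ν₁ (α • p.1)) (ν₂ (α • p.2))) (σ (ν₁ ((1 - α) • p.1)) (ν₂ ((1 - α) • p.2))) :=
          hdom₁ _ _ _ _
  N1 p := by
    rw [sigmaProd_apply, hσ.eq_eps0_iff, h₁.N1, h₂.N1, Prod.ext_iff, Prod.fst_zero, Prod.snd_zero]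

lemma StrongCauchy.fst_of_sigmaProd (hσ : IsTriangleFun σ) {p : ℕ → V₁ × V₂}
    (hp : StrongCauchy (sigmaProd σ ν₁ ν₂) p) : StrongCauchy ν₁ fun n => (p n).1 := by
  intro t ht
  obtain ⟨N, hN⟩ := hp t ht
  exact ⟨N, fun m n hm hn => (hN m n hm hn).trans_le (hσ.le_left _ _ t)⟩

lemma StrongCauchy.snd_of_sigmaProd (hσ : IsTriangleFun σ) {p : ℕ → V₁ × V₂}
    (hp : StrongCauchy (sigmaProd σ ν₁ ν₂) p) : StrongCauchy ν₂ fun n => (p n).2 := by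
  intro t ht
  obtain ⟨N, hN⟩ := hp t ht
  exact ⟨N, fun m n hm hn => (hN m n hm hn).trans_le (hσ.le_right _ _ t)⟩

lemma StrongConv.sigmaProd (hτ : IsTriangleFun τ) (hτc : TriCont τ) (hσ : IsTriangleFun σ)
    (hdom : Dominates σ τ) {p : ℕ → V₁ × V₂} {x : V₁} {y : V₂}
    (hx : StrongConv ν₁ (fun n => (p n).1) x) (hy : StrongConv ν₂ (fun n => (p n).2) y) :
    StrongConv (sigmaProd σ ν₁ ν₂) p (x, y) := by
  have hτ_lim := hτc _ _ eps0 eps0 ((tendsto_sibley_eps0_iff _).2 hx)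
    ((tendsto_sibley_eps0_iff _).2 hy)
  rw [hτ.ident] at hτ_lim
  intro t ht
  obtain ⟨N, hN⟩ := (tendsto_sibley_eps0_iff _).1 hτ_lim t ht
  exact ⟨N, fun n hn => (hN n hn).trans_le (hdom.le hσ hτ _ _ t)⟩

lemma StrongComplete.sigmaProd (hτ : IsTriangleFun τ) (hτc : TriCont τ) (hσ : IsTriangleFun σ)
    (hdom : Dominates σ τ) (hc₁ : StrongComplete ν₁) (hc₂ : StrongComplete ν₂) :
    StrongComplete (sigmaProd σ ν₁ ν₂) := by
  intro p hp
  obtain ⟨x, hx⟩ := hc₁ _ (hp.fst_of_sigmaProd hσ)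
  obtain ⟨y, hy⟩ := hc₂ _ (hp.snd_of_sigmaProd hσ)
  exact ⟨(x, y), hx.sigmaProd hτ hτc hσ hdom hy⟩

end SigmaProduct

theorem sigma_product_PNB_general {V₁ V₂ : Type*} [AddCommGroup V₁] [Module ℝ V₁]
    [AddCommGroup V₂] [Module ℝ V₂]
    (ν₁ : V₁ → DistFun) (ν₂ : V₂ → DistFun)
    (τ τs σ : DistFun → DistFun → DistFun)
    (h₁ : IsPNSpace ν₁ τ τs) (h₂ : IsPNSpace ν₂ τ τs)
    (hσ : IsTriangleFun σ)
    (hdom₁ : Dominates τs σ) (hdom₂ : Dominates σ τ)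
    (hc₁ : StrongComplete ν₁) (hc₂ : StrongComplete ν₂) :
    IsPNSpace (fun pq : V₁ × V₂ => σ (ν₁ pq.1) (ν₂ pq.2)) τ τs ∧
    StrongComplete (fun pq : V₁ × V₂ => σ (ν₁ pq.1) (ν₂ pq.2)) :=
  ⟨h₁.sigmaProd h₂ hσ hdom₁ hdom₂, hc₁.sigmaProd h₁.tri h₁.cont hσ hdom₂ hc₂⟩

theorem sigma_product_PNB {V₁ V₂ : Type*} [AddCommGroup V₁] [Module ℝ V₁]
    [AddCommGroup V₂] [Module ℝ V₂]
    (ν₁ : V₁ → DistFun) (ν₂ : V₂ → DistFun)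
    (τ τs σ : DistFun → DistFun → DistFun)
    (h₁ : IsPNSpace ν₁ τ τs) (h₂ : IsPNSpace ν₂ τ τs)
    (hτ : SupCont τ) (hτs : SupCont τs)
    (hσ : IsTriangleFun σ)
    (hdom₁ : Dominates τs σ) (hdom₂ : Dominates σ τ)
    (hc₁ : StrongComplete ν₁) (hc₂ : StrongComplete ν₂) :
    IsPNSpace (fun pq : V₁ × V₂ => σ (ν₁ pq.1) (ν₂ pq.2)) τ τs ∧
    StrongComplete (fun pq : V₁ × V₂ => σ (ν₁ pq.1) (ν₂ pq.2)) :=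
  sigma_product_PNB_general ν₁ ν₂ τ τs σ h₁ h₂ hσ hdom₁ hdom₂ hc₁ hc₂
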